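/- Let f : ℝ → ℝ be five times continuously differentiable on an open set D, with a simple zero x* ∈ D, and let G : ℝ → ℝ be three times continuously differentiable with G(0) = 1, G'(0) = 2, G''(0) = 10. Define for x near x*, x ≠ x*: y(x) = x − f(x)/f'(x) and z(x) = y(x) − G(f(y(x))/f(x))·f(y(x))/f'(x). Then (z(x) − x*)/(x − x*)⁴ tends to −c₂c₃ as x → x*. -/

import Mathlib

open Filter Topology

/-- `c f xs k = f⁽ᵏ⁾(xs) / (k! f'(xs))`. -/
noncomputable def c (f : ℝ → ℝ) (xs : ℝ) (k : ℕ) : ℝ :=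
  iteratedDeriv k f xs / ((Nat.factorial k : ℝ) * deriv f xs)

/-- The second substep `z` of the method. -/
noncomputable def zmap (f G : ℝ → ℝ) (x : ℝ) : ℝ :=
  let y := x - f x / deriv f x
  y - G (f y / f x) * (f y / deriv f x)


lemma taylor_peano {s : Set ℝ} (hs : IsOpen s) {x₀ : ℝ} (hx₀ : x₀ ∈ s) :
    ∀ (n : ℕ) (f : ℝ → ℝ), ContDiffOn ℝ n f s →
      Tendsto (fun x => (f x - ∑ k ∈ Finset.range (n+1),
        (iteratedDeriv k f x₀ / (Nat.factorial k : ℝ)) * (x - x₀)^k) / (x - x₀)^n)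
        (𝓝 x₀) (𝓝 0) := by
  intro n
  induction n with
  | zero =>
    intro f hf
    simp only [Finset.range_one, Finset.sum_singleton, iteratedDeriv_zero, pow_zero,
      Nat.factorial_zero, Nat.cast_one, div_one, mul_one]
    have h := hf.continuousOn.continuousAt (hs.mem_nhds hx₀)
    simpa using h.sub_const (f x₀)
  | succ n ih =>
    intro f hf
    set g := deriv f with hgdef
    have hg : ContDiffOn ℝ n g s := hf.deriv_of_isOpen hs (by norm_cast)
    have hIH := ih g hg
    set A : ℕ → ℝ := fun k => iteratedDeriv k f x₀ / (Nat.factorial k : ℝ) with hA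
    set B : ℕ → ℝ := fun k => iteratedDeriv k g x₀ / (Nat.factorial k : ℝ) with hB
    have hAB : ∀ k : ℕ, ((k:ℝ)+1) * A (k+1) = B k := by
      intro k
      have hfac : ((k+1).factorial : ℝ) = ((k:ℝ)+1) * (k.factorial : ℝ) := by
        rw [Nat.factorial_succ]; push_cast; ring
      simp only [hA, hB, iteratedDeriv_succ', hfac]
      have h1 : ((k:ℝ)+1) ≠ 0 := by positivity
      have h2 : (k.factorial : ℝ) ≠ 0 := Nat.cast_ne_zero.mpr k.factorial_ne_zero
      field_simp
      rw [← hgdef]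
    set F : ℝ → ℝ := fun x => f x - ∑ k ∈ Finset.range (n+1+1), A k * (x - x₀)^k with hF
    set φ : ℝ → ℝ := fun v => g v - ∑ k ∈ Finset.range (n+1), B k * (v - x₀)^k with hφ
    have hder : ∀ v ∈ s, HasDerivAt F (φ v) v := by
      intro v hv
      have hfd : HasDerivAt f (g v) v := by
        have h1 : DifferentiableAt ℝ f v :=
          (hf.differentiableOn (by simp)).differentiableAt
            (hs.mem_nhds hv)
        exact h1.hasDerivAt
      have hsum : HasDerivAt (fun x => ∑ k ∈ Finset.range (n+1+1), A k * (x - x₀)^k)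
          (∑ k ∈ Finset.range (n+1+1), A k * ((k:ℝ) * (v - x₀)^(k-1))) v := by
        apply HasDerivAt.fun_sum
        intro k _
        have h1 : HasDerivAt (fun x : ℝ => (x - x₀)^k) ((k:ℝ)*(v - x₀)^(k-1)) v := by
          simpa using ((hasDerivAt_id v).sub_const x₀).fun_pow k
        exact h1.const_mul (A k)
      have hre : ∑ k ∈ Finset.range (n+1+1), A k * ((k:ℝ) * (v - x₀)^(k-1))
          = ∑ k ∈ Finset.range (n+1), B k * (v - x₀)^k := by
        rw [Finset.sum_range_succ']
        simp only [Nat.cast_zero, zero_mul, mul_zero, add_zero]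
        apply Finset.sum_congr rfl
        intro k _
        have h2 := hAB k
        simp only [Nat.add_sub_cancel]
        push_cast
        rw [← h2]
        ring
      have := hfd.sub hsum
      rw [hre] at this
      exact this
    have hzero : ∀ (m : ℕ) (C : ℕ → ℝ), ∑ k ∈ Finset.range (m+1), C k * (0:ℝ)^k = C 0 := by
      intro m C
      rw [Finset.sum_range_succ']
      simp
    have hF0 : F x₀ = 0 := by
      simp only [hF, sub_self, hzero (n+1) A]
      simp [hA, iteratedDeriv_zero]
    have hφ0 : φ x₀ = 0 := by
      simp only [hφ, sub_self, hzero n B]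
      simp [hB, iteratedDeriv_zero]
    rw [Metric.tendsto_nhds]
    intro ε hε
    have hε2 : 0 < ε/2 := by linarith
    have h1 : ∀ᶠ v in 𝓝 x₀, ‖φ v‖ ≤ (ε/2) * ‖v - x₀‖^n := by
      have h2 := Metric.tendsto_nhds.mp hIH (ε/2) hε2
      filter_upwards [h2] with v hv
      by_cases hvx : v = x₀
      · subst hvx
        simp only [hφ0, norm_zero]
        positivity
      · have hne : (v - x₀) ≠ 0 := sub_ne_zero.mpr hvx
        have h3 : |φ v| / |v - x₀|^n < ε/2 := by
          simpa [Real.dist_eq, abs_div, abs_pow, hφ, hB] using hv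
        have h6 : |v - x₀|^n ≠ 0 := by positivity
        have h5 : (0:ℝ) ≤ |v - x₀|^n := by positivity
        have h4 : ‖φ v‖ = |φ v| / |v - x₀|^n * |v - x₀|^n := by
          rw [div_mul_cancel₀ _ h6]; rfl
        calc ‖φ v‖ = |φ v| / |v - x₀|^n * |v - x₀|^n := h4
          _ ≤ (ε/2) * |v - x₀|^n := mul_le_mul_of_nonneg_right h3.le h5
          _ = (ε/2) * ‖v - x₀‖^n := by rw [Real.norm_eq_abs]
    have h3 : ∀ᶠ v in 𝓝 x₀, (‖φ v‖ ≤ (ε/2) * ‖v - x₀‖^n ∧ v ∈ s) :=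
      h1.and (hs.mem_nhds hx₀)
    rw [Metric.eventually_nhds_iff] at h3
    obtain ⟨δ, hδ, hball⟩ := h3
    rw [Metric.eventually_nhds_iff]
    refine ⟨δ, hδ, ?_⟩
    intro x hx
    by_cases hxx : x = x₀
    · subst hxx; simpa using hε
    have hseg : segment ℝ x₀ x ⊆ Metric.ball x₀ δ := by
      apply (convex_ball x₀ δ).segment_subset (Metric.mem_ball_self hδ)
      simpa [Metric.mem_ball] using hx
    have hsegb : ∀ v ∈ segment ℝ x₀ x, ‖v - x₀‖ ≤ ‖x - x₀‖ := by
      intro v hv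
      obtain ⟨t1, t2, ht1, ht2, hsum, rfl⟩ := hv
      have heq : t1 • x₀ + t2 • x - x₀ = t2 * (x - x₀) := by
        simp only [smul_eq_mul]; linear_combination x₀ * hsum
      rw [heq, norm_mul]
      have ht : ‖t2‖ ≤ 1 := by rw [Real.norm_eq_abs, abs_of_nonneg ht2]; linarith
      calc ‖t2‖ * ‖x - x₀‖ ≤ 1 * ‖x - x₀‖ :=
            mul_le_mul_of_nonneg_right ht (norm_nonneg _)
        _ = ‖x - x₀‖ := one_mul _
    have hbound : ‖F x - F x₀‖ ≤ ((ε/2) * ‖x - x₀‖^n) * ‖x - x₀‖ := by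
      apply Convex.norm_image_sub_le_of_norm_hasDerivWithin_le
        (f' := φ) ?_ ?_ (convex_segment x₀ x) (left_mem_segment ℝ x₀ x)
        (right_mem_segment ℝ x₀ x)
      · intro v hv
        have hvb := hseg hv
        have hvs := (hball (by simpa [Metric.mem_ball] using hvb)).2
        exact (hder v hvs).hasDerivWithinAt
      · intro v hv
        have hvb := hseg hv
        have h5 := (hball (by simpa [Metric.mem_ball] using hvb)).1
        calc ‖φ v‖ ≤ (ε/2) * ‖v - x₀‖^n := h5
          _ ≤ (ε/2) * ‖x - x₀‖^n := by
              apply mul_le_mul_of_nonneg_left _ (le_of_lt hε2)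
              exact pow_le_pow_left₀ (norm_nonneg _) (hsegb v hv) n
    rw [hF0, sub_zero] at hbound
    have hne : (x - x₀) ≠ 0 := sub_ne_zero.mpr hxx
    have habs : (0:ℝ) < |x - x₀| := by positivity
    have hpos : (0:ℝ) < |x - x₀|^(n+1) := by positivity
    have hval : ‖F x‖ / |x - x₀|^(n+1) ≤ ε/2 := by
      calc ‖F x‖ / |x - x₀|^(n+1)
          ≤ ((ε/2) * ‖x - x₀‖^n * ‖x - x₀‖) / |x - x₀|^(n+1) :=
            (div_le_div_iff_of_pos_right hpos).mpr hbound
        _ = ε/2 := by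
            rw [Real.norm_eq_abs, pow_succ]
            field_simp
    calc dist ((f x - ∑ k ∈ Finset.range (n+1+1), A k * (x - x₀)^k) / (x - x₀)^(n+1)) 0
        = ‖F x‖ / |x - x₀|^(n+1) := by
          simp [hF, Real.dist_eq, abs_div, abs_pow]
      _ ≤ ε/2 := hval
      _ < ε := by linarith


set_option maxHeartbeats 1000000

lemma stageD (E mv Kv Dp Fb cc : ℝ) (hE : E ≠ 0) (hD : Dp ≠ 0) (hF : Fb ≠ 0) :
    (E^2*mv/Dp - (1 + 2*(E*mv*Kv/(Dp^2*Fb)) + 5*(E*mv*Kv/(Dp^2*Fb))^2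
        + cc*(E*mv*Kv/(Dp^2*Fb))^3) * (E^2*mv*Kv/Dp^2/Dp))/E^4
      = mv/(E^2*Dp) - mv*Kv/(E^2*Dp^3) - 2*mv^2*Kv^2/(E*Dp^5*Fb)
        - 5*mv^3*Kv^3/(Dp^7*Fb^2) - cc*E*mv^4*Kv^4/(Dp^9*Fb^3) := by
  field_simp
  ring

lemma stageL (E a A2 A3 A4 rr ss mm Dp q m l1 K : ℝ)
    (hq : q = 2*A2 + 3*A3*E + (4*A4+ss)*E^2)
    (hm : m = A2 + 2*A3*E + (3*A4+ss-rr)*E^2)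
    (hD : Dp = a + E*q)
    (hl1 : l1 = q^2 - (A2+mm)*m)
    (hK : K = a*Dp + (A2+mm)*E^2*m) :
    Dp^2 - K = E*(a*q + E*l1) := by
  subst hq hm hl1 hD hK
  ring

lemma stageB (E a A2 A3 A4 rr ss mm Dp Fb q p m w u J k1 l1 K M : ℝ)
    (hq : q = 2*A2 + 3*A3*E + (4*A4+ss)*E^2)
    (hp : p = A2 + A3*E + (A4+rr)*E^2)
    (hm : m = A2 + 2*A3*E + (3*A4+ss-rr)*E^2)
    (hw : w = -A3 + (2*rr - ss - 2*A4)*E)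
    (hD : Dp = a + E*q) (hF : Fb = a + E*p)
    (hu : u = 2*a*q + E*q^2) (hJ : J = a^2*p + a*u + E*u*p)
    (hk1 : k1 = a*q + (A2+mm)*E*m) (hl1 : l1 = q^2 - (A2+mm)*m)
    (hK : K = a*Dp + (A2+mm)*E^2*m)
    (hM : M = a^4*w + a*q*J + l1*Dp^2*Fb - 2*m*(2*a^2*k1 + E*k1^2)) :
    (a*q + E*l1)*Dp^2*Fb - 2*m*K^2 = E*M := by
  have hDF : Dp^2*Fb = a^3 + E*J := by
    subst hD hF hu hJ
    ring
  have hKk : K = a^2 + E*k1 := by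
    subst hD hK hk1
    ring
  have hqm : q - 2*m = E*w := by
    subst hq hm hw
    ring
  rw [hM]
  linear_combination (a*q)*hDF + (-2*m*(K + a^2 + E*k1))*hKk + a^4*hqm

lemma stageE' (E m K Dp Fb L M : ℝ) (hE0 : E ≠ 0) (hD0 : Dp ≠ 0) (hF0 : Fb ≠ 0)
    (hL : Dp^2 - K = E*L) (hB : L*Dp^2*Fb - 2*m*K^2 = E*M) :
    m/(E^2*Dp) - m*K/(E^2*Dp^3) - 2*m^2*K^2/(E*Dp^5*Fb) = m*M/(Dp^5*Fb) := by
  have hnum : m*Dp^4*Fb - m*K*Dp^2*Fb - 2*m^2*K^2*E = E^2*(m*M) := by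
    linear_combination (m*Dp^2*Fb)*hL + (m*E)*hB
  have e1 : m/(E^2*Dp) - m*K/(E^2*Dp^3) - 2*m^2*K^2/(E*Dp^5*Fb)
      = (m*Dp^4*Fb - m*K*Dp^2*Fb - 2*m^2*K^2*E)/(E^2*Dp^5*Fb) := by
    field_simp
  rw [e1, hnum, show E^2*Dp^5*Fb = E^2*(Dp^5*Fb) by ring,
    mul_div_mul_left _ _ (pow_ne_zero 2 hE0)]

lemma key_identity (E a A2 A3 A4 rr ss mm tt Dp Fb q p m w u J k1 l1 K M T : ℝ)
    (hq : q = 2*A2 + 3*A3*E + (4*A4+ss)*E^2)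
    (hp : p = A2 + A3*E + (A4+rr)*E^2)
    (hm : m = A2 + 2*A3*E + (3*A4+ss-rr)*E^2)
    (hw : w = -A3 + (2*rr - ss - 2*A4)*E)
    (hD : Dp = a + E*q) (hF : Fb = a + E*p)
    (hu : u = 2*a*q + E*q^2) (hJ : J = a^2*p + a*u + E*u*p)
    (hk1 : k1 = a*q + (A2+mm)*E*m) (hl1 : l1 = q^2 - (A2+mm)*m)
    (hK : K = a*Dp + (A2+mm)*E^2*m)
    (hM : M = a^4*w + a*q*J + l1*Dp^2*Fb - 2*m*(2*a^2*k1 + E*k1^2))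
    (hT : T = E*m*K/(Dp^2*Fb))
    (hE0 : E ≠ 0) (hD0 : Dp ≠ 0) (hF0 : Fb ≠ 0) :
    (E^2*m/Dp - (1 + 2*T + 5*T^2 + tt*T^3)*(E^2*m*K/Dp^2/Dp))/E^4
      = m*M/(Dp^5*Fb) - 5*m^3*K^3/(Dp^7*Fb^2) - tt*E*m^4*K^4/(Dp^9*Fb^3) := by
  rw [hT, stageD E m K Dp Fb tt hE0 hD0 hF0]
  have hL := stageL E a A2 A3 A4 rr ss mm Dp q m l1 K hq hm hD hl1 hK
  have hB := stageB E a A2 A3 A4 rr ss mm Dp Fb q p m w u J k1 l1 K M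
    hq hp hm hw hD hF hu hJ hk1 hl1 hK hM
  have h5 := stageE' E m K Dp Fb (a*q + E*l1) M hE0 hD0 hF0 hL hB
  rw [← h5]

/-- `(z(x) - xs)/(x - xs)⁴ → -c₂ c₃` as `x → xs`, `x ≠ xs`,
when `G 0 = 1`, `G' 0 = 2`, `G'' 0 = 10`. -/
theorem z_error_constant
    (D : Set ℝ) (hD : IsOpen D) (f : ℝ → ℝ) (xs : ℝ) (hxs : xs ∈ D)
    (hf : ContDiffOn ℝ 5 f D) (hf0 : f xs = 0) (hf1 : deriv f xs ≠ 0)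
    (G : ℝ → ℝ) (hG : ContDiff ℝ 3 G) (hG0 : G 0 = 1) (hG1 : deriv G 0 = 2)
    (hG2 : iteratedDeriv 2 G 0 = 10) :
    Tendsto (fun x : ℝ => (zmap f G x - xs) / (x - xs) ^ 4) (𝓝[≠] xs)
      (𝓝 (-(c f xs 2) * c f xs 3)) := by
  set a := deriv f xs with ha
  set A2 : ℝ := iteratedDeriv 2 f xs / 2 with hA2
  set A3 : ℝ := iteratedDeriv 3 f xs / 6 with hA3
  set A4 : ℝ := iteratedDeriv 4 f xs / 24 with hA4
  set g3 : ℝ := iteratedDeriv 3 G 0 / 6 with hg3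
  clear_value a A2 A3 A4 g3
  set ρ : ℝ → ℝ := fun x => (f x - (a*(x - xs) + A2*(x - xs)^2 + A3*(x - xs)^3
    + A4*(x - xs)^4)) / (x - xs)^4 with hρd
  set σ : ℝ → ℝ := fun x => (deriv f x - (a + 2*A2*(x - xs) + 3*A3*(x - xs)^2
    + 4*A4*(x - xs)^3)) / (x - xs)^3 with hσd
  set μ : ℝ → ℝ := fun v => (f v - (a*(v - xs) + A2*(v - xs)^2)) / (v - xs)^2 with hμd
  set τ : ℝ → ℝ := fun s => (G s - (1 + 2*s + 5*s^2 + g3*s^3)) / s^3 with hτd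
  clear_value ρ σ μ τ
  have hDf : ContDiffOn ℝ 4 (deriv f) D := hf.deriv_of_isOpen hD (by norm_num)
  -- Peano remainders
  have hρ0 : Tendsto ρ (𝓝 xs) (𝓝 0) := by
    have h := taylor_peano hD hxs 4 f (hf.of_le (by norm_num))
    apply h.congr
    intro x
    rw [Finset.sum_range_succ, Finset.sum_range_succ, Finset.sum_range_succ,
      Finset.sum_range_succ, Finset.sum_range_one]
    simp only [hρd, hA2, hA3, hA4, ha]
    simp [iteratedDeriv_zero, iteratedDeriv_one, hf0, Nat.factorial]
    try ring_nf
  have hσ0 : Tendsto σ (𝓝 xs) (𝓝 0) := by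
    have h := taylor_peano hD hxs 3 (deriv f) (hDf.of_le (by norm_num))
    apply h.congr
    intro x
    rw [Finset.sum_range_succ, Finset.sum_range_succ, Finset.sum_range_succ,
      Finset.sum_range_one]
    simp only [← iteratedDeriv_succ']
    simp only [hσd, hA2, hA3, hA4, ha]
    simp [iteratedDeriv_zero, iteratedDeriv_one, Nat.factorial]
    try ring_nf
  have hμ0 : Tendsto μ (𝓝 xs) (𝓝 0) := by
    have h := taylor_peano hD hxs 2 f (hf.of_le (by norm_num))
    apply h.congr
    intro x
    rw [Finset.sum_range_succ, Finset.sum_range_succ, Finset.sum_range_one]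
    simp only [hμd, hA2, ha]
    simp [iteratedDeriv_zero, iteratedDeriv_one, hf0, Nat.factorial]
    try ring_nf
  have hτ0 : Tendsto τ (𝓝 0) (𝓝 0) := by
    have h := taylor_peano isOpen_univ (Set.mem_univ (0:ℝ)) 3 G (hG.contDiffOn.of_le (by norm_num))
    apply h.congr
    intro s
    rw [Finset.sum_range_succ, Finset.sum_range_succ, Finset.sum_range_succ,
      Finset.sum_range_one]
    simp only [hτd, hg3]
    simp [iteratedDeriv_zero, iteratedDeriv_one, hG0, hG1, hG2, Nat.factorial]
    try ring_nf
  -- basic limits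
  have hEt : Tendsto (fun x : ℝ => x - xs) (𝓝[≠] xs) (𝓝 0) := by
    have h : Tendsto (fun x : ℝ => x - xs) (𝓝 xs) (𝓝 (xs - xs)) :=
      (continuous_id.sub continuous_const).tendsto xs
    rw [sub_self] at h
    exact h.mono_left nhdsWithin_le_nhds
  have hρl := hρ0.mono_left (nhdsWithin_le_nhds (s := {xs}ᶜ))
  have hσl := hσ0.mono_left (nhdsWithin_le_nhds (s := {xs}ᶜ))
  have hfc : Tendsto f (𝓝 xs) (𝓝 0) := by
    have h : Tendsto f (𝓝 xs) (𝓝 (f xs)) := hf.continuousOn.continuousAt (hD.mem_nhds hxs)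
    rwa [hf0] at h
  have hdc : Tendsto (deriv f) (𝓝 xs) (𝓝 a) := by
    rw [ha]
    exact hDf.continuousOn.continuousAt (hD.mem_nhds hxs)
  have hyt : Tendsto (fun x => x - f x / deriv f x) (𝓝 xs) (𝓝 xs) := by
    have h1 : Tendsto (fun x => f x / deriv f x) (𝓝 xs) (𝓝 (0 / a)) := hfc.div hdc hf1
    have h2 := (tendsto_id (α := ℝ) (x := 𝓝 xs)).sub h1
    simpa using h2
  have hyl : Tendsto (fun x => x - f x / deriv f x) (𝓝[≠] xs) (𝓝 xs) :=
    hyt.mono_left nhdsWithin_le_nhds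
  have hμyl0 : Tendsto (fun x => μ (x - f x / deriv f x)) (𝓝[≠] xs) (𝓝 0) := by
    exact hμ0.comp hyl
  have hdne : ∀ᶠ x in 𝓝[≠] xs, deriv f x ≠ 0 :=
    (hdc.mono_left nhdsWithin_le_nhds).eventually_ne hf1
  -- pointwise expansions
  have I1 : ∀ x, x ≠ xs → f x = a*(x - xs) + A2*(x - xs)^2 + A3*(x - xs)^3
      + (A4 + ρ x)*(x - xs)^4 := by
    intro x hx
    have h2 : (x - xs) ≠ 0 := sub_ne_zero.mpr hx
    simp only [hρd]
    field_simp
    ring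
  have I2 : ∀ x, x ≠ xs → deriv f x = a + 2*A2*(x - xs) + 3*A3*(x - xs)^2
      + (4*A4 + σ x)*(x - xs)^3 := by
    intro x hx
    have h2 : (x - xs) ≠ 0 := sub_ne_zero.mpr hx
    simp only [hσd]
    field_simp
    ring
  have I3 : ∀ v, f v = a*(v - xs) + (A2 + μ v)*(v - xs)^2 := by
    intro v
    by_cases hv : v = xs
    · subst hv; simp [hf0]
    · have h2 : (v - xs) ≠ 0 := sub_ne_zero.mpr hv
      simp only [hμd]
      field_simp
      ring
  have I4 : ∀ s, G s = 1 + 2*s + 5*s^2 + (g3 + τ s)*s^3 := by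
    intro s
    by_cases hs : s = 0
    · subst hs; simp [hG0]
    · simp only [hτd]
      field_simp
      ring
  have hfne : ∀ᶠ x in 𝓝[≠] xs, f x ≠ 0 := by
    have h1 : Tendsto (fun x => a + (A2 + μ x)*(x - xs)) (𝓝[≠] xs) (𝓝 (a + (A2 + 0)*0)) :=
      tendsto_const_nhds.add
        ((tendsto_const_nhds.add (hμ0.mono_left nhdsWithin_le_nhds)).mul hEt)
    rw [show a + (A2 + (0:ℝ))*0 = a by ring] at h1
    filter_upwards [h1.eventually_ne hf1, self_mem_nhdsWithin] with x h2 h3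
    have hx : x ≠ xs := h3
    rw [I3 x, show a*(x - xs) + (A2 + μ x)*(x - xs)^2
      = (x - xs)*(a + (A2 + μ x)*(x - xs)) by ring]
    exact mul_ne_zero (sub_ne_zero.mpr hx) h2
  -- component functions
  set q : ℝ → ℝ := fun x => 2*A2 + 3*A3*(x - xs) + (4*A4 + σ x)*(x - xs)^2 with hqd
  set p : ℝ → ℝ := fun x => A2 + A3*(x - xs) + (A4 + ρ x)*(x - xs)^2 with hpd
  set m : ℝ → ℝ := fun x => A2 + 2*A3*(x - xs) + (3*A4 + σ x - ρ x)*(x - xs)^2 with hmd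
  set w : ℝ → ℝ := fun x => -A3 + (2*ρ x - σ x - 2*A4)*(x - xs) with hwd
  set Dq : ℝ → ℝ := fun x => a + (x - xs)*(q x) with hDqd
  set Fq : ℝ → ℝ := fun x => a + (x - xs)*(p x) with hFqd
  set u : ℝ → ℝ := fun x => 2*a*(q x) + (x - xs)*(q x)^2 with hud
  set J : ℝ → ℝ := fun x => a^2*(p x) + a*(u x) + (x - xs)*(u x)*(p x) with hJd
  set μy : ℝ → ℝ := fun x => μ (x - f x / deriv f x) with hμyd
  set k1 : ℝ → ℝ := fun x => a*(q x) + (A2 + μy x)*(x - xs)*(m x) with hk1d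
  set l1 : ℝ → ℝ := fun x => (q x)^2 - (A2 + μy x)*(m x) with hl1d
  set K : ℝ → ℝ := fun x => a*(Dq x) + (A2 + μy x)*(x - xs)^2*(m x) with hKd
  set M : ℝ → ℝ := fun x => a^4*(w x) + a*(q x)*(J x) + (l1 x)*(Dq x)^2*(Fq x)
    - 2*(m x)*(2*a^2*(k1 x) + (x - xs)*(k1 x)^2) with hMd
  set T : ℝ → ℝ := fun x => (x - xs)*(m x)*(K x)/((Dq x)^2*(Fq x)) with hTd
  set Φ : ℝ → ℝ := fun x => (m x)*(M x)/((Dq x)^5*(Fq x))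
    - 5*(m x)^3*(K x)^3/((Dq x)^7*(Fq x)^2)
    - (g3 + τ (T x))*(x - xs)*(m x)^4*(K x)^4/((Dq x)^9*(Fq x)^3) with hΦd
  clear_value q p m w Dq Fq u J μy k1 l1 K M T Φ
  have hμyl : Tendsto μy (𝓝[≠] xs) (𝓝 0) := hμyl0
  -- the eventual identity
  have hmain : (fun x => (zmap f G x - xs)/(x - xs)^4) =ᶠ[𝓝[≠] xs] Φ := by
    filter_upwards [self_mem_nhdsWithin, hdne, hfne] with x hx' hdp hfx
    have hx : x ≠ xs := hx'
    have hE0 : x - xs ≠ 0 := sub_ne_zero.mpr hx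
    set y := x - f x / deriv f x with hyd
    have hfq : f x = (x - xs)*(Fq x) := by
      rw [I1 x hx]
      simp only [hFqd, hpd]
      ring
    have hFq0 : Fq x ≠ 0 := by
      intro h
      apply hfx
      rw [hfq, h, mul_zero]
    have hdq : deriv f x = Dq x := by
      rw [I2 x hx]
      simp only [hDqd, hqd]
      ring
    have hDq0 : Dq x ≠ 0 := by rw [← hdq]; exact hdp
    have hY : y - xs = (x - xs)^2*(m x)/(Dq x) := by
      rw [eq_div_iff hDq0]
      have h2 : y*(deriv f x) = x*(deriv f x) - f x := by
        rw [hyd, sub_mul, div_mul_cancel₀ _ hdp]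
      calc (y - xs)*(Dq x) = y*(deriv f x) - xs*(deriv f x) := by rw [← hdq]; ring
        _ = x*(deriv f x) - f x - xs*(deriv f x) := by rw [h2]
        _ = (x - xs)^2*(m x) := by
            rw [I1 x hx, I2 x hx]
            simp only [hmd]
            ring
    have hμyx : μy x = μ y := by simp only [hμyd, hyd]
    have hfy : f y = (x - xs)^2*(m x)*(K x)/(Dq x)^2 := by
      rw [I3 y, hY]
      have hKx : K x = a*(Dq x) + (A2 + μ y)*(x - xs)^2*(m x) := by
        simp only [hKd]
        rw [← hμyx]
      rw [hKx]
      field_simp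
    have hfyx : f y / f x = T x := by
      rw [hfy, hfq]
      have hTx : T x = (x - xs)*(m x)*(K x)/((Dq x)^2*(Fq x)) := by
        simp only [hTd]
      rw [hTx]
      field_simp
    have hGt : G (f y / f x) = 1 + 2*(T x) + 5*(T x)^2 + (g3 + τ (T x))*(T x)^3 := by
      rw [I4 (f y / f x), hfyx]
    have hz : zmap f G x = y - G (f y / f x) * (f y / deriv f x) := by
      simp only [zmap]
      try rw [← hyd]
    rw [hz, hGt, hdq, hfy, sub_right_comm, hY]
    have hkey := key_identity (x - xs) a A2 A3 A4 (ρ x) (σ x) (μy x) (g3 + τ (T x))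
      (Dq x) (Fq x) (q x) (p x) (m x) (w x) (u x) (J x) (k1 x) (l1 x) (K x) (M x) (T x)
      (by simp only [hqd]) (by simp only [hpd]) (by simp only [hmd]) (by simp only [hwd])
      (by simp only [hDqd]) (by simp only [hFqd]) (by simp only [hud]) (by simp only [hJd])
      (by simp only [hk1d]) (by simp only [hl1d]) (by simp only [hKd]) (by simp only [hMd])
      (by simp only [hTd]) hE0 hDq0 hFq0
    rw [hkey]
    simp only [hΦd]
  -- limits of components
  have hql : Tendsto q (𝓝[≠] xs) (𝓝 (2*A2)) := by
    rw [show (2*A2 : ℝ) = 2*A2 + 3*A3*0 + (4*A4 + 0)*0^2 by ring]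
    simp only [hqd]
    exact (tendsto_const_nhds.add (tendsto_const_nhds.mul hEt)).add
      ((tendsto_const_nhds.add hσl).mul (hEt.pow 2))
  have hpl : Tendsto p (𝓝[≠] xs) (𝓝 A2) := by
    rw [show (A2 : ℝ) = A2 + A3*0 + (A4 + 0)*0^2 by ring]
    simp only [hpd]
    exact (tendsto_const_nhds.add (tendsto_const_nhds.mul hEt)).add
      ((tendsto_const_nhds.add hρl).mul (hEt.pow 2))
  have hml : Tendsto m (𝓝[≠] xs) (𝓝 A2) := by
    rw [show (A2 : ℝ) = A2 + 2*A3*0 + (3*A4 + 0 - 0)*0^2 by ring]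
    simp only [hmd]
    exact (tendsto_const_nhds.add (tendsto_const_nhds.mul hEt)).add
      (((tendsto_const_nhds.add hσl).sub hρl).mul (hEt.pow 2))
  have hwl : Tendsto w (𝓝[≠] xs) (𝓝 (-A3)) := by
    rw [show (-A3 : ℝ) = -A3 + (2*0 - 0 - 2*A4)*0 by ring]
    simp only [hwd]
    exact tendsto_const_nhds.add
      ((((tendsto_const_nhds.mul hρl).sub hσl).sub tendsto_const_nhds).mul hEt)
  have hDql : Tendsto Dq (𝓝[≠] xs) (𝓝 a) := by
    rw [show (a : ℝ) = a + 0*(2*A2) by ring]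
    simp only [hDqd]
    exact tendsto_const_nhds.add (hEt.mul hql)
  have hFql : Tendsto Fq (𝓝[≠] xs) (𝓝 a) := by
    rw [show (a : ℝ) = a + 0*A2 by ring]
    simp only [hFqd]
    exact tendsto_const_nhds.add (hEt.mul hpl)
  have hul : Tendsto u (𝓝[≠] xs) (𝓝 (4*(a*A2))) := by
    rw [show (4*(a*A2) : ℝ) = 2*a*(2*A2) + 0*(2*A2)^2 by ring]
    simp only [hud]
    exact (tendsto_const_nhds.mul hql).add (hEt.mul (hql.pow 2))
  have hJl : Tendsto J (𝓝[≠] xs) (𝓝 (5*(a^2*A2))) := by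
    rw [show (5*(a^2*A2) : ℝ) = a^2*A2 + a*(4*(a*A2)) + 0*(4*(a*A2))*A2 by ring]
    simp only [hJd]
    exact ((tendsto_const_nhds.mul hpl).add (tendsto_const_nhds.mul hul)).add
      ((hEt.mul hul).mul hpl)
  have hk1l : Tendsto k1 (𝓝[≠] xs) (𝓝 (2*(a*A2))) := by
    rw [show (2*(a*A2) : ℝ) = a*(2*A2) + (A2 + 0)*0*A2 by ring]
    simp only [hk1d]
    exact (tendsto_const_nhds.mul hql).add
      (((tendsto_const_nhds.add hμyl).mul hEt).mul hml)
  have hl1l : Tendsto l1 (𝓝[≠] xs) (𝓝 (3*A2^2)) := by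
    rw [show (3*A2^2 : ℝ) = (2*A2)^2 - (A2 + 0)*A2 by ring]
    simp only [hl1d]
    exact (hql.pow 2).sub ((tendsto_const_nhds.add hμyl).mul hml)
  have hKl : Tendsto K (𝓝[≠] xs) (𝓝 (a^2)) := by
    rw [show (a^2 : ℝ) = a*a + (A2 + 0)*0^2*A2 by ring]
    simp only [hKd]
    exact (tendsto_const_nhds.mul hDql).add
      (((tendsto_const_nhds.add hμyl).mul (hEt.pow 2)).mul hml)
  have hMl : Tendsto M (𝓝[≠] xs) (𝓝 (5*(a^3*A2^2) - a^4*A3)) := by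
    rw [show (5*(a^3*A2^2) - a^4*A3 : ℝ)
      = a^4*(-A3) + a*(2*A2)*(5*(a^2*A2)) + 3*A2^2*a^2*a
        - 2*A2*(2*a^2*(2*(a*A2)) + 0*(2*(a*A2))^2) by ring]
    simp only [hMd]
    exact (((tendsto_const_nhds.mul hwl).add
        ((tendsto_const_nhds.mul hql).mul hJl)).add
        ((hl1l.mul (hDql.pow 2)).mul hFql)).sub
      ((tendsto_const_nhds.mul hml).mul
        ((tendsto_const_nhds.mul hk1l).add (hEt.mul (hk1l.pow 2))))
  have ha2a : (a^2*a : ℝ) ≠ 0 := mul_ne_zero (pow_ne_zero _ hf1) hf1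
  have hTl : Tendsto T (𝓝[≠] xs) (𝓝 0) := by
    rw [show (0 : ℝ) = 0*A2*a^2/(a^2*a) by ring]
    simp only [hTd]
    exact ((hEt.mul hml).mul hKl).div ((hDql.pow 2).mul hFql) ha2a
  have hτTl : Tendsto (fun x => τ (T x)) (𝓝[≠] xs) (𝓝 0) := by
    exact hτ0.comp hTl
  -- limit of Φ
  have hne1 : (a^5*a : ℝ) ≠ 0 := mul_ne_zero (pow_ne_zero _ hf1) hf1
  have hne2 : (a^7*a^2 : ℝ) ≠ 0 := mul_ne_zero (pow_ne_zero _ hf1) (pow_ne_zero _ hf1)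
  have hne3 : (a^9*a^3 : ℝ) ≠ 0 := mul_ne_zero (pow_ne_zero _ hf1) (pow_ne_zero _ hf1)
  have t1 : Tendsto (fun x => (m x)*(M x)/((Dq x)^5*(Fq x))) (𝓝[≠] xs)
      (𝓝 (A2*(5*(a^3*A2^2) - a^4*A3)/(a^5*a))) :=
    (hml.mul hMl).div ((hDql.pow 5).mul hFql) hne1
  have t2 : Tendsto (fun x => 5*(m x)^3*(K x)^3/((Dq x)^7*(Fq x)^2)) (𝓝[≠] xs)
      (𝓝 (5*A2^3*(a^2)^3/(a^7*a^2))) :=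
    ((tendsto_const_nhds.mul (hml.pow 3)).mul (hKl.pow 3)).div
      ((hDql.pow 7).mul (hFql.pow 2)) hne2
  have t3 : Tendsto (fun x => (g3 + τ (T x))*(x - xs)*(m x)^4*(K x)^4/((Dq x)^9*(Fq x)^3))
      (𝓝[≠] xs) (𝓝 ((g3 + 0)*0*A2^4*(a^2)^4/(a^9*a^3))) :=
    ((((tendsto_const_nhds.add hτTl).mul hEt).mul (hml.pow 4)).mul (hKl.pow 4)).div
      ((hDql.pow 9).mul (hFql.pow 3)) hne3
  have hΦl : Tendsto Φ (𝓝[≠] xs)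
      (𝓝 (A2*(5*(a^3*A2^2) - a^4*A3)/(a^5*a) - 5*A2^3*(a^2)^3/(a^7*a^2)
        - (g3 + 0)*0*A2^4*(a^2)^4/(a^9*a^3))) := by
    simp only [hΦd]
    exact (t1.sub t2).sub t3
  have hVeq : -(c f xs 2) * c f xs 3
      = A2*(5*(a^3*A2^2) - a^4*A3)/(a^5*a) - 5*A2^3*(a^2)^3/(a^7*a^2)
        - (g3 + 0)*0*A2^4*(a^2)^4/(a^9*a^3) := by
    have hdfne : deriv f xs ≠ 0 := by rw [← ha]; exact hf1
    simp only [c]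
    rw [hA2, hA3, ha]
    norm_num [Nat.factorial]
    field_simp
    ring
  rw [hVeq]
  exact hΦl.congr' hmain.symm
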